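/- The polynomial q(z) = 4z⁵ − 12z⁴ + 9z³ − 3z² − 4z + 2 has a real root ẑ with 2.2 < ẑ < 2.21, and for this root λ̂ = (ẑ² + 1)/ẑ + 2 satisfies 4.659 < λ̂ < 4.66. -/

import Mathlib

/-!
The quintic is negative at 2.206 and positive at 2.2065, so the intermediate value theorem gives
a root `ẑ` there. Since `(z² + 1)/z + 2 = z + z⁻¹ + 2` and `z ↦ z + z⁻¹` is increasing on `[1, ∞)`,
`λ̂` lies between its values at the two endpoints, `4.6593…` and `4.6597…`.
-/

open Set

theorem monotoneOn_add_inv : MonotoneOn (fun z : ℝ => z + z⁻¹) (Ici 1) := by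
  intro a (ha : 1 ≤ a) b (hb : 1 ≤ b) hab
  have hab_pos : 0 < a * b := by positivity
  have hdiff : b + b⁻¹ - (a + a⁻¹) = (b - a) * (a * b - 1) / (a * b) := by
    field_simp
    ring
  have hnonneg : 0 ≤ (b - a) * (a * b - 1) / (a * b) :=
    div_nonneg (mul_nonneg (sub_nonneg.2 hab) (by nlinarith)) hab_pos.le
  show a + a⁻¹ ≤ b + b⁻¹
  linarith

theorem exists_root_quintic_mem_Icc :
    ∃ z ∈ Icc (2.206 : ℝ) 2.2065,
      4 * z ^ 5 - 12 * z ^ 4 + 9 * z ^ 3 - 3 * z ^ 2 - 4 * z + 2 = 0 := by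
  have hsign : (0 : ℝ) ∈ Icc
      (4 * (2.206:ℝ) ^ 5 - 12 * 2.206 ^ 4 + 9 * 2.206 ^ 3 - 3 * 2.206 ^ 2 - 4 * 2.206 + 2)
      (4 * (2.2065:ℝ) ^ 5 - 12 * 2.2065 ^ 4 + 9 * 2.2065 ^ 3 - 3 * 2.2065 ^ 2
        - 4 * 2.2065 + 2) := by
    constructor <;> norm_num
  exact intermediate_value_Icc (by norm_num) (by fun_prop) hsign

theorem qce_interface_polynomial_root :
    ∃ z : ℝ, 2.2 < z ∧ z < 2.21 ∧
      4 * z ^ 5 - 12 * z ^ 4 + 9 * z ^ 3 - 3 * z ^ 2 - 4 * z + 2 = 0 ∧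
      4.659 < (z ^ 2 + 1) / z + 2 ∧ (z ^ 2 + 1) / z + 2 < 4.66 := by
  obtain ⟨z, ⟨hlo, hhi⟩, hroot⟩ := exists_root_quintic_mem_Icc
  have hz : z ≠ 0 := by positivity
  have hlambda : (z ^ 2 + 1) / z + 2 = z + z⁻¹ + 2 := by
    field_simp
  have hmono := monotoneOn_add_inv
  have hlower := hmono (show (1 : ℝ) ≤ 2.206 by norm_num) (show (1 : ℝ) ≤ z by linarith) hlo
  have hupper := hmono (show (1 : ℝ) ≤ z by linarith) (show (1 : ℝ) ≤ 2.2065 by norm_num) hhi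
  norm_num at hlower hupper
  refine ⟨z, by linarith, by linarith, hroot, ?_, ?_⟩ <;> rw [hlambda] <;> linarith
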